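/- arXiv:2002.07891 — 2 statements merged into one kernel-verified Lean document; each statement's English description precedes it below -/
import Mathlib

section
/- Let T be a finite nonempty type and let p : ℝ^d → T → ℝ be a parametrized family of positive probability mass functions (p(δ, t) > 0 and ∑_{t} p(δ, t) = 1) with δ ↦ p(δ, t) twice continuously differentiable for each t. Then the information matrix equality holds at every δ: − ∑_{t ∈ T} p(δ, t) · ∇²_δ log p(δ, t) = ∑_{t ∈ T} p(δ, t) · (∇_δ log p(δ, t)) (∇_δ log p(δ, t))ᵀ, i.e. the negative expected Hessian of the log-likelihood equals the Fisher information matrix. -/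
open scoped BigOperators

/-- The Hessian matrix of a function `g : ℝ^d → ℝ` at a point `x`. -/
noncomputable def hessianMatrix {d : ℕ} (g : EuclideanSpace ℝ (Fin d) → ℝ)
    (x : EuclideanSpace ℝ (Fin d)) : Matrix (Fin d) (Fin d) ℝ :=
  Matrix.of fun i j =>
    iteratedFDeriv ℝ 2 g x ![EuclideanSpace.single i (1 : ℝ), EuclideanSpace.single j (1 : ℝ)]

lemma gradient_coord {d : ℕ} (g : EuclideanSpace ℝ (Fin d) → ℝ)
    (x : EuclideanSpace ℝ (Fin d)) (i : Fin d) :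
    gradient g x i = fderiv ℝ g x (EuclideanSpace.single i (1 : ℝ)) := by
  have h : (inner ℝ (gradient g x) (EuclideanSpace.single i (1 : ℝ)) : ℝ)
      = fderiv ℝ g x (EuclideanSpace.single i (1 : ℝ)) :=
    InnerProductSpace.toDual_symm_apply
  rw [EuclideanSpace.inner_single_right] at h
  simpa using h

lemma fderiv_log_comp {d : ℕ} (f : EuclideanSpace ℝ (Fin d) → ℝ)
    (hf : ContDiff ℝ 2 f) (hpos : ∀ x, 0 < f x) (x : EuclideanSpace ℝ (Fin d)) :
    fderiv ℝ (fun y => Real.log (f y)) x = (f x)⁻¹ • fderiv ℝ f x :=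
  (((hf.differentiable (by norm_num) x).hasFDerivAt).log (ne_of_gt (hpos x))).fderiv

lemma key_entry {d : ℕ} (f : EuclideanSpace ℝ (Fin d) → ℝ)
    (hf : ContDiff ℝ 2 f) (hpos : ∀ x, 0 < f x) (δ u v : EuclideanSpace ℝ (Fin d)) :
    f δ * fderiv ℝ (fderiv ℝ (fun y => Real.log (f y))) δ u v
      = fderiv ℝ (fderiv ℝ f) δ u v - (f δ)⁻¹ * (fderiv ℝ f δ u * fderiv ℝ f δ v) := by
  have hdf : Differentiable ℝ f := hf.differentiable (by norm_num)
  have hF : ContDiff ℝ 1 (fderiv ℝ f) := hf.fderiv_right (by norm_num)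
  have hFd : DifferentiableAt ℝ (fderiv ℝ f) δ := (hF.differentiable one_ne_zero) δ
  have hinv : HasFDerivAt (fun y => (f y)⁻¹)
      ((-(f δ ^ 2)⁻¹) • fderiv ℝ f δ) δ := by
    have h1 : HasDerivAt (fun z : ℝ => z⁻¹) (-(f δ ^ 2)⁻¹) (f δ) :=
      hasDerivAt_inv (ne_of_gt (hpos δ))
    exact h1.comp_hasFDerivAt δ (hdf δ).hasFDerivAt
  have hsmul : HasFDerivAt (fun y => (f y)⁻¹ • fderiv ℝ f y)
      ((f δ)⁻¹ • fderiv ℝ (fderiv ℝ f) δ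
        + ((-(f δ ^ 2)⁻¹) • fderiv ℝ f δ).smulRight (fderiv ℝ f δ)) δ :=
    hinv.smul hFd.hasFDerivAt
  have heq : fderiv ℝ (fderiv ℝ (fun y => Real.log (f y))) δ
      = (f δ)⁻¹ • fderiv ℝ (fderiv ℝ f) δ
        + ((-(f δ ^ 2)⁻¹) • fderiv ℝ f δ).smulRight (fderiv ℝ f δ) := by
    have : (fderiv ℝ fun y => Real.log (f y))
        = fun y => (f y)⁻¹ • fderiv ℝ f y := funext fun y => fderiv_log_comp f hf hpos y
    rw [this]
    exact hsmul.fderiv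
  rw [heq]
  simp only [ContinuousLinearMap.add_apply, ContinuousLinearMap.coe_smul',
    Pi.smul_apply, ContinuousLinearMap.smulRight_apply, smul_eq_mul]
  have hne : f δ ≠ 0 := ne_of_gt (hpos δ)
  field_simp
  ring

/-- **Information matrix equality.** For a parametrized family of positive probability
mass functions `p : ℝ^d → T → ℝ` on a finite nonempty type `T`, twice continuously
differentiable in the parameter, the negative expected Hessian of the log-likelihood
equals the Fisher information matrix (the expected outer product of the score
`∇_δ log p(δ, t)`), at every `δ`. -/
theorem information_matrix_equality {d : ℕ} {T : Type*} [Fintype T] [Nonempty T]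
    (p : EuclideanSpace ℝ (Fin d) → T → ℝ)
    (hpos : ∀ δ t, 0 < p δ t)
    (hsum : ∀ δ, ∑ t, p δ t = 1)
    (hdiff : ∀ t, ContDiff ℝ 2 fun δ => p δ t) :
    ∀ δ, - ∑ t, p δ t • hessianMatrix (fun δ' => Real.log (p δ' t)) δ =
      ∑ t, p δ t •
        Matrix.vecMulVec (fun i => gradient (fun δ' => Real.log (p δ' t)) δ i)
          (fun i => gradient (fun δ' => Real.log (p δ' t)) δ i) := by
  intro δ
  have hdf : ∀ t, Differentiable ℝ fun δ' => p δ' t :=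
    fun t => (hdiff t).differentiable (by norm_num)
  have hF : ∀ t, ContDiff ℝ 1 (fderiv ℝ fun δ' => p δ' t) :=
    fun t => (hdiff t).fderiv_right (by norm_num)
  -- sum of first derivatives is zero
  have hsum1 : ∀ y, ∑ t, fderiv ℝ (fun δ' => p δ' t) y = 0 := by
    intro y
    have h1 : fderiv ℝ (fun y' => ∑ t, p y' t) y = ∑ t, fderiv ℝ (fun δ' => p δ' t) y :=
      fderiv_fun_sum fun t _ => (hdf t) y
    have h2 : (fun y' => ∑ t, p y' t) = fun _ => (1 : ℝ) := funext fun y' => hsum y'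
    rw [h2, fderiv_fun_const] at h1
    simpa using h1.symm
  -- sum of second derivatives is zero
  have hsum2 : ∑ t, fderiv ℝ (fderiv ℝ fun δ' => p δ' t) δ = 0 := by
    have h1 : fderiv ℝ (fun y => ∑ t, fderiv ℝ (fun δ' => p δ' t) y) δ
        = ∑ t, fderiv ℝ (fderiv ℝ fun δ' => p δ' t) δ :=
      fderiv_fun_sum fun t _ => ((hF t).differentiable one_ne_zero) δ
    have h2 : (fun y => ∑ t, fderiv ℝ (fun δ' => p δ' t) y)
        = fun _ => (0 : EuclideanSpace ℝ (Fin d) →L[ℝ] ℝ) := funext fun y => hsum1 y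
    rw [h2, fderiv_fun_const] at h1
    simpa using h1.symm
  ext i j
  set u := EuclideanSpace.single i (1 : ℝ) with hu
  set v := EuclideanSpace.single j (1 : ℝ) with hv
  have hsum2' : ∑ t, fderiv ℝ (fderiv ℝ fun δ' => p δ' t) δ u v = 0 := by
    have := congrArg (fun (L : EuclideanSpace ℝ (Fin d) →L[ℝ]
        (EuclideanSpace ℝ (Fin d) →L[ℝ] ℝ)) => L u v) hsum2
    simpa using this
  simp only [Matrix.neg_apply, Finset.sum_apply, Matrix.sum_apply, Matrix.smul_apply,
    hessianMatrix, Matrix.of_apply, Matrix.vecMulVec_apply, smul_eq_mul]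
  rw [← Finset.sum_neg_distrib]
  rw [← sub_eq_zero, ← Finset.sum_sub_distrib]
  have hterm : ∀ t, -(p δ t * iteratedFDeriv ℝ 2 (fun δ' => Real.log (p δ' t)) δ ![u, v])
      - p δ t * (gradient (fun δ' => Real.log (p δ' t)) δ i
          * gradient (fun δ' => Real.log (p δ' t)) δ j)
      = -(fderiv ℝ (fderiv ℝ fun δ' => p δ' t) δ u v) := by
    intro t
    have hk := key_entry (fun δ' => p δ' t) (hdiff t) (fun x => hpos x t) δ u v
    have h2 : iteratedFDeriv ℝ 2 (fun δ' => Real.log (p δ' t)) δ ![u, v]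
        = fderiv ℝ (fderiv ℝ (fun δ' => Real.log (p δ' t))) δ u v := by
      rw [iteratedFDeriv_two_apply]
      simp
    have hgi : gradient (fun δ' => Real.log (p δ' t)) δ i
        = (p δ t)⁻¹ * fderiv ℝ (fun δ' => p δ' t) δ u := by
      rw [gradient_coord, fderiv_log_comp _ (hdiff t) (fun x => hpos x t)]
      simp [hu]
    have hgj : gradient (fun δ' => Real.log (p δ' t)) δ j
        = (p δ t)⁻¹ * fderiv ℝ (fun δ' => p δ' t) δ v := by
      rw [gradient_coord, fderiv_log_comp _ (hdiff t) (fun x => hpos x t)]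
      simp [hv]
    rw [h2, hgi, hgj]
    have hne : p δ t ≠ 0 := ne_of_gt (hpos δ t)
    field_simp at hk
    field_simp
    linear_combination (-1 : ℝ) * hk
  rw [Finset.sum_congr rfl fun t _ => hterm t]
  rw [Finset.sum_neg_distrib, hsum2', neg_zero]
end

section
/- Let T be a finite nonempty type and let p : ℝ^d → T → ℝ be a parametrized family of positive probability mass functions (p(δ, t) > 0 and ∑_{t} p(δ, t) = 1) with δ ↦ p(δ, t) twice continuously differentiable for each t. Fix δ, let F be the Fisher information matrix at δ, and define g(α) = KL(p(δ, ·) ‖ p(δ + α, ·)). Then the second-order Taylor expansion of the KL divergence is governed by F: g(α) − (1/2) αᵀ F α = o(‖α‖²) as α → 0. -/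
open scoped BigOperators
open Matrix Asymptotics Filter

/-- Second-order Taylor little-o lemma. -/
lemma quad_littleO {E : Type*} [NormedAddCommGroup E] [NormedSpace ℝ E]
    {f : E → ℝ} {f' : E → E →L[ℝ] ℝ} {B : E →L[ℝ] E →L[ℝ] ℝ}
    (hd : ∀ x, HasFDerivAt f (f' x) x) (hB : HasFDerivAt f' B 0)
    (h0 : f 0 = 0) (h1 : f' 0 = 0) :
    (fun α => f α - (1 / 2) * B α α) =o[nhds (0 : E)] fun α => ‖α‖ ^ 2 := by
  have hsymm : ∀ v w, B v w = B w v := fun v w => second_derivative_symmetric hd hB v w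
  set φ : E → ℝ := fun x => f x - (1 / 2) * B x x with hφ
  have hφ' : ∀ x : E, HasFDerivAt φ (f' x - B x) x := by
    intro x
    have h2 : HasFDerivAt (fun y : E => B y y)
        ((B x).comp (ContinuousLinearMap.id ℝ E) + B.flip x) x :=
      HasFDerivAt.clm_apply (B.hasFDerivAt) (hasFDerivAt_id x)
    have h3 : HasFDerivAt (fun y : E => (1 / 2 : ℝ) * B y y)
        ((1 / 2 : ℝ) • ((B x).comp (ContinuousLinearMap.id ℝ E) + B.flip x)) x := h2.const_mul _
    have h4 : (1 / 2 : ℝ) • ((B x).comp (ContinuousLinearMap.id ℝ E) + B.flip x) = B x := by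
      ext w
      simp [hsymm x w]
      ring
    rw [h4] at h3
    exact (hd x).sub h3
  have key : (fun x : E => f' x - B x) =o[nhds 0] fun x => x := by
    have := hasFDerivAt_iff_isLittleO_nhds_zero.1 hB
    simpa [h1] using this
  rw [isLittleO_iff] at key ⊢
  intro ε hε
  rcases Metric.eventually_nhds_iff.1 (key hε) with ⟨r, hr, hball⟩
  have : ∀ᶠ α : E in nhds 0, ‖α‖ < r := by
    filter_upwards [Metric.ball_mem_nhds (0 : E) hr] with α hα
    simpa [dist_eq_norm] using hα
  filter_upwards [this] with α hα
  have hseg : ∀ x ∈ segment ℝ (0 : E) α, ‖f' x - B x‖ ≤ ε * ‖α‖ := by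
    intro x hx
    rcases hx with ⟨a, b, ha, hb, hab, hx⟩
    have hxn : ‖x‖ ≤ ‖α‖ := by
      have : x = b • α := by rw [← hx]; simp
      rw [this]
      calc ‖b • α‖ = b * ‖α‖ := by rw [norm_smul, Real.norm_of_nonneg hb]
      _ ≤ 1 * ‖α‖ := by nlinarith [norm_nonneg α]
      _ = ‖α‖ := one_mul _
    have hxr : dist x 0 < r := by
      rw [dist_zero_right]; exact lt_of_le_of_lt hxn hα
    have := hball hxr
    calc ‖f' x - B x‖ ≤ ε * ‖x‖ := by simpa [h1] using this
    _ ≤ ε * ‖α‖ := by nlinarith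
  have hmv := Convex.norm_image_sub_le_of_norm_hasFDerivWithin_le
    (f := φ) (f' := fun x => f' x - B x) (s := segment ℝ (0 : E) α) (C := ε * ‖α‖)
    (fun x _ => (hφ' x).hasFDerivWithinAt) hseg (convex_segment _ _)
    (left_mem_segment ℝ 0 α) (right_mem_segment ℝ 0 α)
  have hφ0 : φ 0 = 0 := by simp [hφ, h0]
  rw [hφ0, sub_zero, sub_zero] at hmv
  calc ‖φ α‖ ≤ ε * ‖α‖ * ‖α‖ := hmv
  _ = ε * ‖‖α‖ ^ 2‖ := by rw [Real.norm_of_nonneg (by positivity)]; ring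

/-- **Second-order Taylor expansion of the KL divergence.** For a parametrized family of
positive probability mass functions `p : ℝ^d → T → ℝ` on a finite nonempty type `T`,
twice continuously differentiable in the parameter, a fixed `δ`, the Fisher information
matrix `F = ∑ t, p(δ,t) • (∇ log p(δ,t))(∇ log p(δ,t))ᵀ`, and
`g(α) = KL(p(δ,·) ‖ p(δ+α,·))`, we have `g(α) − (1/2) αᵀ F α = o(‖α‖²)` as `α → 0`. -/
theorem kl_taylor_expansion_fisher {d : ℕ} {T : Type*} [Fintype T] [Nonempty T]
    (p : EuclideanSpace ℝ (Fin d) → T → ℝ)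
    (hpos : ∀ δ t, 0 < p δ t)
    (hsum : ∀ δ, ∑ t, p δ t = 1)
    (hdiff : ∀ t, ContDiff ℝ 2 fun δ => p δ t)
    (δ : EuclideanSpace ℝ (Fin d))
    (F : Matrix (Fin d) (Fin d) ℝ)
    (hF : F = ∑ t, p δ t •
      Matrix.vecMulVec (fun i => gradient (fun δ' => Real.log (p δ' t)) δ i)
        (fun i => gradient (fun δ' => Real.log (p δ' t)) δ i))
    (g : EuclideanSpace ℝ (Fin d) → ℝ)
    (hg : ∀ α, g α = ∑ t, p δ t * Real.log (p δ t / p (δ + α) t)) :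
    (fun α : EuclideanSpace ℝ (Fin d) =>
        g α - (1 / 2) * ((fun i => α i) ⬝ᵥ F.mulVec fun i => α i))
      =o[nhds 0] fun α => ‖α‖ ^ 2 := by
  have hne : ∀ (x) (t : T), p x t ≠ 0 := fun x t => ne_of_gt (hpos x t)
  have hPd : ∀ (t : T) (x : EuclideanSpace ℝ (Fin d)),
      HasFDerivAt (fun y => p y t) (fderiv ℝ (fun y => p y t) x) x := fun t x =>
    (((hdiff t).differentiable (by norm_num)) x).hasFDerivAt
  have hD1 : ∀ t : T, ContDiff ℝ 1 (fderiv ℝ (fun y => p y t)) := fun t =>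
    (hdiff t).fderiv_right (by norm_num)
  have hHd : ∀ t : T, HasFDerivAt (fderiv ℝ (fun y => p y t))
      (fderiv ℝ (fderiv ℝ (fun y => p y t)) δ) δ := fun t =>
    (((hD1 t).differentiable (by norm_num)) δ).hasFDerivAt
  have hsumD : ∀ x, ∑ t, fderiv ℝ (fun y => p y t) x = 0 := by
    intro x
    have h1 : HasFDerivAt (fun x => ∑ t, p x t) (∑ t, fderiv ℝ (fun y => p y t) x) x :=
      HasFDerivAt.fun_sum fun t _ => hPd t x
    have h2 : (fun x => ∑ t, p x t) = fun _ => (1 : ℝ) := funext fun x => hsum x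
    rw [h2] at h1
    exact h1.unique (hasFDerivAt_const 1 x)
  have hsumH : ∑ t, fderiv ℝ (fderiv ℝ (fun y => p y t)) δ = 0 := by
    have h1 : HasFDerivAt (fun x => ∑ t, fderiv ℝ (fun y => p y t) x)
        (∑ t, fderiv ℝ (fderiv ℝ (fun y => p y t)) δ) δ :=
      HasFDerivAt.fun_sum fun t _ => hHd t
    have h2 : (fun x => ∑ t, fderiv ℝ (fun y => p y t) x)
        = fun _ => (0 : EuclideanSpace ℝ (Fin d) →L[ℝ] ℝ) := funext hsumD
    rw [h2] at h1
    exact h1.unique (hasFDerivAt_const 0 δ)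
  have hshift : ∀ (t : T) (α : EuclideanSpace ℝ (Fin d)),
      HasFDerivAt (fun β => p (δ + β) t) (fderiv ℝ (fun y => p y t) (δ + α)) α := by
    intro t α
    have h1 : HasFDerivAt (fun β : EuclideanSpace ℝ (Fin d) => δ + β)
        (ContinuousLinearMap.id ℝ _) α := (hasFDerivAt_id α).const_add δ
    have := (hPd t (δ + α)).comp α h1
    rw [ContinuousLinearMap.comp_id] at this
    exact this
  have hshiftD : ∀ (t : T),
      HasFDerivAt (fun β => fderiv ℝ (fun y => p y t) (δ + β))
        (fderiv ℝ (fderiv ℝ (fun y => p y t)) δ) 0 := by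
    intro t
    have h1 : HasFDerivAt (fun β : EuclideanSpace ℝ (Fin d) => δ + β)
        (ContinuousLinearMap.id ℝ _) 0 := (hasFDerivAt_id 0).const_add δ
    have h2 : HasFDerivAt (fderiv ℝ (fun y => p y t))
        (fderiv ℝ (fderiv ℝ (fun y => p y t)) δ) (δ + 0) := by
      simpa using hHd t
    have := h2.comp (0 : EuclideanSpace ℝ (Fin d)) h1
    rw [ContinuousLinearMap.comp_id] at this
    exact this
  -- derivative of g
  set g' : EuclideanSpace ℝ (Fin d) → (EuclideanSpace ℝ (Fin d) →L[ℝ] ℝ) :=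
    fun α => ∑ t, ((-(p δ t)) * (p (δ + α) t)⁻¹) • fderiv ℝ (fun y => p y t) (δ + α) with hg'
  have hgd : ∀ α, HasFDerivAt g (g' α) α := by
    intro α
    have h1 : HasFDerivAt (fun β => ∑ t, p δ t * Real.log (p (δ + β) t))
        (∑ t, (p δ t) • ((p (δ + α) t)⁻¹ • fderiv ℝ (fun y => p y t) (δ + α))) α :=
      HasFDerivAt.fun_sum fun t _ => ((hshift t α).log (hne _ t)).const_mul (p δ t)
    have h2 : g = fun β => (∑ t, p δ t * Real.log (p δ t))
        - ∑ t, p δ t * Real.log (p (δ + β) t) := by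
      funext β
      rw [hg β, ← Finset.sum_sub_distrib]
      exact Finset.sum_congr rfl fun t _ => by
        rw [Real.log_div (hne _ t) (hne _ t), mul_sub]
    rw [h2]
    have h3 := h1.const_sub (∑ t, p δ t * Real.log (p δ t))
    refine h3.congr_fderiv ?_
    rw [hg', ← Finset.sum_neg_distrib]
    exact Finset.sum_congr rfl fun t _ => by
      rw [smul_smul, ← neg_smul, neg_mul]
  -- second derivative of g at 0
  set B : EuclideanSpace ℝ (Fin d) →L[ℝ] EuclideanSpace ℝ (Fin d) →L[ℝ] ℝ :=
    ∑ t, (((-(p δ t)) * (p δ t)⁻¹) • fderiv ℝ (fderiv ℝ (fun y => p y t)) δ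
      + (((-(p δ t)) • ((-((p δ t) ^ 2)⁻¹) • fderiv ℝ (fun y => p y t) δ))).smulRight
          (fderiv ℝ (fun y => p y t) δ)) with hB
  have hBd : HasFDerivAt g' B 0 := by
    rw [hg', hB]
    apply HasFDerivAt.fun_sum
    intro t _
    have hminv : HasFDerivAt (fun β => (p (δ + β) t)⁻¹)
        ((-((p (δ + 0) t) ^ 2)⁻¹) • fderiv ℝ (fun y => p y t) (δ + 0)) 0 :=
      (hasDerivAt_inv (hne _ t)).comp_hasFDerivAt 0 (hshift t 0)
    have hm : HasFDerivAt (fun β => (-(p δ t)) * (p (δ + β) t)⁻¹)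
        ((-(p δ t)) • ((-((p (δ + 0) t) ^ 2)⁻¹) • fderiv ℝ (fun y => p y t) (δ + 0))) 0 :=
      hminv.const_mul _
    have hu : HasFDerivAt (fun β => fderiv ℝ (fun y => p y t) (δ + β))
        (fderiv ℝ (fderiv ℝ (fun y => p y t)) δ) 0 := hshiftD t
    have hsm := hm.smul hu
    simp only [add_zero] at hsm
    exact hsm
  -- g 0 = 0
  have hg0 : g 0 = 0 := by
    rw [hg 0]
    simp [div_self (hne δ _)]
  -- g' 0 = 0
  have hg'0 : g' 0 = 0 := by
    rw [hg']
    ext v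
    simp only [ContinuousLinearMap.sum_apply, ContinuousLinearMap.smul_apply, add_zero,
      ContinuousLinearMap.zero_apply, smul_eq_mul]
    have h1 : ∀ t : T, -p δ t * (p δ t)⁻¹ * (fderiv ℝ (fun y => p y t) δ) v
        = -((fderiv ℝ (fun y => p y t) δ) v) := by
      intro t
      rw [neg_mul, mul_inv_cancel₀ (hne δ t), neg_one_mul]
    rw [Finset.sum_congr rfl fun t _ => h1 t, Finset.sum_neg_distrib,
      ← ContinuousLinearMap.sum_apply, hsumD δ]
    simp
  have main := quad_littleO hgd hBd hg0 hg'0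
  -- identify quadratic forms
  have hquad : ∀ α : EuclideanSpace ℝ (Fin d),
      ((fun i => α i) ⬝ᵥ F.mulVec fun i => α i) = B α α := by
    intro α
    have hgrad : ∀ t : T, (∑ i, gradient (fun y => Real.log (p y t)) δ i * α i)
        = (p δ t)⁻¹ * fderiv ℝ (fun y => p y t) δ α := by
      intro t
      have hL : HasFDerivAt (fun y => Real.log (p y t))
          ((p δ t)⁻¹ • fderiv ℝ (fun y => p y t) δ) δ := (hPd t δ).log (hne δ t)
      have hGrad : HasGradientAt (fun y => Real.log (p y t))
          (gradient (fun y => Real.log (p y t)) δ) δ := hL.differentiableAt.hasGradientAt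
      rw [hasGradientAt_iff_hasFDerivAt] at hGrad
      have huniq := hGrad.unique hL
      have happ := congrArg (fun (L : EuclideanSpace ℝ (Fin d) →L[ℝ] ℝ) => L α) huniq
      simp only [InnerProductSpace.toDualMap_apply_apply, ContinuousLinearMap.smul_apply,
        smul_eq_mul] at happ
      rw [← happ, InnerProductSpace.toDual_apply_apply, PiLp.inner_apply]
      simp [RCLike.inner_apply, conj_trivial]
      exact Finset.sum_congr rfl fun i _ => mul_comm _ _
    -- evaluate B
    have hBval : B α α = ∑ t, (p δ t)⁻¹ *
        (fderiv ℝ (fun y => p y t) δ α * fderiv ℝ (fun y => p y t) δ α) := by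
      rw [hB]
      simp only [ContinuousLinearMap.sum_apply, ContinuousLinearMap.add_apply,
        ContinuousLinearMap.smul_apply, ContinuousLinearMap.smulRight_apply, smul_eq_mul]
      have hzero : ∑ t, (fderiv ℝ (fderiv ℝ (fun y => p y t)) δ) α α = 0 := by
        have h5 : ∑ t, (fderiv ℝ (fderiv ℝ (fun y => p y t)) δ) α α
            = ((∑ t, fderiv ℝ (fderiv ℝ (fun y => p y t)) δ) α) α := by
          simp [ContinuousLinearMap.sum_apply]
        rw [h5, hsumH]
        simp
      have h1 : ∀ t : T, -p δ t * (p δ t)⁻¹ * ((fderiv ℝ (fderiv ℝ (fun y => p y t)) δ) α α)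
          = -((fderiv ℝ (fderiv ℝ (fun y => p y t)) δ) α α) := by
        intro t
        rw [neg_mul, mul_inv_cancel₀ (hne δ t), neg_one_mul]
      have h2 : ∀ t : T, -p δ t * (-((p δ t) ^ 2)⁻¹ * ((fderiv ℝ (fun y => p y t) δ) α))
            * ((fderiv ℝ (fun y => p y t) δ) α)
          = (p δ t)⁻¹ * ((fderiv ℝ (fun y => p y t) δ) α * (fderiv ℝ (fun y => p y t) δ) α) := by
        intro t
        have hcne := hne δ t
        field_simp
      rw [Finset.sum_add_distrib, Finset.sum_congr rfl fun t _ => h1 t,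
        Finset.sum_congr rfl fun t _ => h2 t, Finset.sum_neg_distrib, hzero]
      simp
    rw [hBval, hF]
    have expand : ((fun i => α i) ⬝ᵥ
          (∑ t, p δ t • Matrix.vecMulVec (fun i => gradient (fun y => Real.log (p y t)) δ i)
            (fun i => gradient (fun y => Real.log (p y t)) δ i)).mulVec fun i => α i)
        = ∑ t, p δ t * ((∑ i, gradient (fun y => Real.log (p y t)) δ i * α i)
            * (∑ j, gradient (fun y => Real.log (p y t)) δ j * α j)) := by
      simp only [dotProduct, mulVec, Matrix.sum_apply, Matrix.smul_apply, vecMulVec_apply,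
        smul_eq_mul]
      calc ∑ i, α i * ∑ j, (∑ t, p δ t * (gradient (fun y => Real.log (p y t)) δ i
              * gradient (fun y => Real.log (p y t)) δ j)) * α j
          = ∑ i, ∑ j, ∑ t, p δ t * (gradient (fun y => Real.log (p y t)) δ i
              * gradient (fun y => Real.log (p y t)) δ j) * (α i * α j) := by
            refine Finset.sum_congr rfl fun i _ => ?_
            rw [Finset.mul_sum]
            refine Finset.sum_congr rfl fun j _ => ?_
            rw [Finset.sum_mul, Finset.mul_sum]
            exact Finset.sum_congr rfl fun t _ => by ring
        _ = ∑ t, ∑ i, ∑ j, p δ t * (gradient (fun y => Real.log (p y t)) δ i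
              * gradient (fun y => Real.log (p y t)) δ j) * (α i * α j) := by
            rw [Finset.sum_congr rfl fun i (_ : i ∈ Finset.univ) => Finset.sum_comm]
            exact Finset.sum_comm
        _ = ∑ t, p δ t * ((∑ i, gradient (fun y => Real.log (p y t)) δ i * α i)
              * (∑ j, gradient (fun y => Real.log (p y t)) δ j * α j)) := by
            refine Finset.sum_congr rfl fun t _ => ?_
            rw [Finset.sum_mul_sum, Finset.mul_sum]
            refine Finset.sum_congr rfl fun i _ => ?_
            rw [Finset.mul_sum]
            exact Finset.sum_congr rfl fun j _ => by ring
    rw [expand]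
    refine Finset.sum_congr rfl fun t _ => ?_
    rw [hgrad t]
    have hcne := hne δ t
    field_simp
  have hfun : (fun α : EuclideanSpace ℝ (Fin d) =>
      g α - (1 / 2) * ((fun i => α i) ⬝ᵥ F.mulVec fun i => α i))
      = fun α => g α - (1 / 2) * B α α := by
    funext α
    rw [hquad α]
  rw [hfun]
  exact main
end
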